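/- Any two distinct dual grids of W(q) intersect in an even number of points; consequently the code D spanned by characteristic vectors of dual grids is self-orthogonal up to the claim D ⊆ D^⊥. -/

import Mathlib

open scoped Classical
open Module

noncomputable section

variable (F : Type) [Field F] [Fintype F]

abbrev V4 := Fin 4 → F

def IsPt (p : Submodule F (V4 F)) : Prop := finrank F p = 1

def IsLn (L : Submodule F (V4 F)) : Prop := finrank F L = 2

def ptsOn (L : Submodule F (V4 F)) : Set (Submodule F (V4 F)) :=
  {p | IsPt F p ∧ p ≤ L}

def Coll3 (p r s : Submodule F (V4 F)) : Prop :=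
  ∃ L, IsLn F L ∧ p ≤ L ∧ r ≤ L ∧ s ≤ L

def IsOvoid (q : ℕ) (O : Set (Submodule F (V4 F))) : Prop :=
  (∀ p ∈ O, IsPt F p) ∧ O.ncard = q ^ 2 + 1 ∧
    ∀ p ∈ O, ∀ r ∈ O, ∀ s ∈ O, p ≠ r → p ≠ s → r ≠ s → ¬ Coll3 F p r s

def TotIso (B : LinearMap.BilinForm F (V4 F)) (L : Submodule F (V4 F)) : Prop :=
  IsLn F L ∧ ∀ x ∈ L, ∀ y ∈ L, B x y = 0

def Pt := {p : Submodule F (V4 F) // IsPt F p}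

def chi (s : Set (Submodule F (V4 F))) : Pt F → ZMod 2 :=
  fun p => if p.1 ∈ s then 1 else 0

def commonTangents (q : ℕ) (θ : Fin (q + 1) → Set (Submodule F (V4 F))) :
    Set (Submodule F (V4 F)) :=
  {L | IsLn F L ∧ ∀ i, (θ i ∩ ptsOn F L).ncard = 1}

def gridSet (B : LinearMap.BilinForm F (V4 F)) (m : Submodule F (V4 F)) :
    Set (Submodule F (V4 F)) :=
  ptsOn F m ∪ ptsOn F (LinearMap.BilinForm.orthogonal B m)

def lineCode (B : LinearMap.BilinForm F (V4 F)) :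
    Submodule (ZMod 2) (Pt F → ZMod 2) :=
  Submodule.span (ZMod 2) {w | ∃ L, TotIso F B L ∧ w = chi F (ptsOn F L)}

def gridCode (B : LinearMap.BilinForm F (V4 F)) :
    Submodule (ZMod 2) (Pt F → ZMod 2) :=
  Submodule.span (ZMod 2)
    {w | ∃ m, IsLn F m ∧ ¬ (∀ x ∈ m, ∀ y ∈ m, B x y = 0) ∧ w = chi F (gridSet F B m)}

/-!
The points of `g ∩ g'` split over the four intersections `X ⊓ Y` with `X ∈ {m, m^⊥}` and
`Y ∈ {m', m'^⊥}`, which are pairwise disjoint because a non-isotropic line of an alternating form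
meets its polar trivially. As `m^⊥ ⊓ m'^⊥ = (m ⊔ m')^⊥` and `dim m + dim m' = dim V`, the
subspaces `m ⊓ m'` and `m^⊥ ⊓ m'^⊥` have the same dimension, hence the same number of points,
and likewise `m ⊓ m'^⊥` and `m^⊥ ⊓ m'`. So `|g ∩ g'|` is even for all dual grids, equal or not;
in particular the dot product vanishes on pairs of generators of `D`, hence on `D × D`.
-/

namespace LinearMap.BilinForm

variable {K V : Type*} [Field K] [AddCommGroup V] [Module K V]

lemma orthogonal_sup (B : LinearMap.BilinForm K V) (X Y : Submodule K V) :
    B.orthogonal (X ⊔ Y) = B.orthogonal X ⊓ B.orthogonal Y := by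
  ext v
  simp only [mem_orthogonal_iff, Submodule.mem_inf]
  refine ⟨fun h => ⟨fun x hx => h x (Submodule.mem_sup_left hx),
    fun y hy => h y (Submodule.mem_sup_right hy)⟩, ?_⟩
  rintro ⟨hX, hY⟩ _ hz
  obtain ⟨x, hx, y, hy, rfl⟩ := Submodule.mem_sup.mp hz
  rw [map_add, LinearMap.add_apply, hX x hx, hY y hy, add_zero]

lemma finrank_orthogonal_inf_orthogonal [FiniteDimensional K V] {B : LinearMap.BilinForm K V}
    (hB : B.Nondegenerate) {X Y : Submodule K V}
    (hXY : finrank K X + finrank K Y = finrank K V) :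
    finrank K ↥(B.orthogonal X ⊓ B.orthogonal Y) = finrank K ↥(X ⊓ Y) := by
  rw [← orthogonal_sup, finrank_orthogonal hB]
  have := Submodule.finrank_sup_add_finrank_inf_eq X Y
  have := Submodule.finrank_le (X ⊔ Y)
  omega

lemma IsAlt.disjoint_orthogonal {B : LinearMap.BilinForm K V} (hB : B.IsAlt) {X : Submodule K V}
    (hX : finrank K X = 2) (hXni : ¬ ∀ x ∈ X, ∀ y ∈ X, B x y = 0) :
    Disjoint X (B.orthogonal X) := by
  push Not at hXni
  obtain ⟨x, hx, y, hy, hxy⟩ := hXni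
  have coeff_eq_zero : ∀ s t : K, B x (s • x + t • y) = 0 → B y (s • x + t • y) = 0 →
      s = 0 ∧ t = 0 := by
    intro s t hsx hty
    rw [map_add, map_smul, map_smul, smul_eq_mul, smul_eq_mul, hB x, mul_zero, zero_add]
      at hsx
    rw [map_add, map_smul, map_smul, smul_eq_mul, smul_eq_mul, hB y, mul_zero, add_zero,
      ← LinearMap.IsAlt.neg hB x y, mul_neg, neg_eq_zero] at hty
    exact ⟨(mul_eq_zero.mp hty).resolve_right hxy, (mul_eq_zero.mp hsx).resolve_right hxy⟩
  have hli : LinearIndependent K ![x, y] :=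
    LinearIndependent.pair_iff.2 fun s t h => coeff_eq_zero s t (by simp [h]) (by simp [h])
  have : Module.Finite K X := Module.finite_of_finrank_eq_succ hX
  have hspan : Submodule.span K (Set.range ![x, y]) = X := by
    refine Submodule.eq_of_le_of_finrank_le ?_ (by rw [finrank_span_eq_card hli, hX]; simp)
    rw [Submodule.span_le, Set.range_subset_iff]
    exact Fin.forall_fin_two.2 ⟨hx, hy⟩
  rw [disjoint_iff, eq_bot_iff]
  intro v hv
  obtain ⟨hvX, hvo⟩ := Submodule.mem_inf.1 hv
  rw [← hspan, Submodule.mem_span_range_iff_exists_fun] at hvX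
  obtain ⟨c, rfl⟩ := hvX
  rw [mem_orthogonal_iff] at hvo
  simp only [Fin.sum_univ_two, Matrix.cons_val_zero, Matrix.cons_val_one] at hvo ⊢
  obtain ⟨h0, h1⟩ := coeff_eq_zero (c 0) (c 1) (hvo x hx) (hvo y hy)
  simp [h0, h1]

end LinearMap.BilinForm

lemma LinearMap.apply_apply_eq_zero_of_mem_span {R M N : Type*} [CommSemiring R]
    [AddCommMonoid M] [AddCommMonoid N] [Module R M] [Module R N] (f : M →ₗ[R] M →ₗ[R] N)
    {S : Set M} (hS : ∀ x ∈ S, ∀ y ∈ S, f x y = 0) {x y : M}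
    (hx : x ∈ Submodule.span R S) (hy : y ∈ Submodule.span R S) : f x y = 0 := by
  have hSy : ∀ z ∈ S, f z y = 0 := fun z hz =>
    (Submodule.span_le (p := LinearMap.ker (f z))).2 (fun w hw => hS z hz w hw) hy
  exact Submodule.span_le (p := LinearMap.ker (f.flip y)).2 hSy hx

section Points

variable {K : Type} [Field K]

lemma finrank_V4 : finrank K (V4 K) = 4 := Module.finrank_fin_fun K

lemma ptsOn_inf (X Y : Submodule K (V4 K)) : ptsOn K X ∩ ptsOn K Y = ptsOn K (X ⊓ Y) := by
  ext p
  simp only [ptsOn, Set.mem_inter_iff, Set.mem_ofPred_eq, le_inf_iff]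
  tauto

lemma disjoint_ptsOn {X Y : Submodule K (V4 K)} (h : Disjoint X Y) :
    Disjoint (ptsOn K X) (ptsOn K Y) := by
  rw [Set.disjoint_left]
  rintro p ⟨hp, hpX⟩ ⟨-, hpY⟩
  rw [IsPt, le_bot_iff.1 (h hpX hpY), finrank_bot] at hp
  exact zero_ne_one hp

lemma ptsOn_eq_image_map_subtype (X : Submodule K (V4 K)) :
    ptsOn K X = Submodule.map X.subtype '' {H : Submodule K X | finrank K H = 1} := by
  ext p
  constructor
  · rintro ⟨hp, hpX⟩
    refine ⟨Submodule.comap X.subtype p, ?_, ?_⟩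
    · rwa [Set.mem_ofPred_eq, ← Submodule.finrank_map_subtype_eq, Submodule.map_comap_subtype,
        inf_eq_right.2 hpX]
    · rw [Submodule.map_comap_subtype, inf_eq_right.2 hpX]
  · rintro ⟨H, hH, rfl⟩
    exact ⟨(Submodule.finrank_map_subtype_eq X H).trans hH, Submodule.map_subtype_le X H⟩

lemma isPt_of_mem_gridSet {B : LinearMap.BilinForm K (V4 K)} {m : Submodule K (V4 K)} :
    ∀ x ∈ gridSet K B m, IsPt K x := by
  rintro x (hx | hx) <;> exact hx.1

end Points

section FiniteField

variable {F}

lemma ncard_ptsOn (X : Submodule F (V4 F)) :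
    (ptsOn F X).ncard = ∑ i ∈ Finset.range (finrank F X), Fintype.card F ^ i := by
  rw [ptsOn_eq_image_map_subtype,
    Set.ncard_image_of_injective _ (Submodule.map_injective_of_injective X.injective_subtype),
    ← Nat.card_coe_set_eq, ← Nat.card_eq_fintype_card,
    ← Projectivization.card_of_finrank F X rfl]
  exact Nat.card_congr (Projectivization.equivSubmodule F X).symm

lemma ncard_ptsOn_inter_gridSet {B : LinearMap.BilinForm F (V4 F)} {m : Submodule F (V4 F)}
    (hm : Disjoint m (B.orthogonal m)) (X : Submodule F (V4 F)) :
    (ptsOn F X ∩ gridSet F B m).ncard =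
      (ptsOn F (X ⊓ m)).ncard + (ptsOn F (X ⊓ B.orthogonal m)).ncard := by
  rw [gridSet, Set.inter_union_distrib_left, ptsOn_inf, ptsOn_inf]
  exact Set.ncard_union_eq (disjoint_ptsOn (hm.mono inf_le_right inf_le_right))

open LinearMap.BilinForm in
lemma even_ncard_gridSet_inter {B : LinearMap.BilinForm F (V4 F)} (hB : B.IsAlt)
    (hnd : B.Nondegenerate) {m m' : Submodule F (V4 F)} (hm : IsLn F m) (hm' : IsLn F m')
    (hmni : ¬ ∀ x ∈ m, ∀ y ∈ m, B x y = 0) (hm'ni : ¬ ∀ x ∈ m', ∀ y ∈ m', B x y = 0) :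
    Even ((gridSet F B m ∩ gridSet F B m').ncard) := by
  have hdm := hB.disjoint_orthogonal hm hmni
  have hdm' := hB.disjoint_orthogonal hm' hm'ni
  have hm'o : finrank F (B.orthogonal m') = 2 := by
    rw [finrank_orthogonal hnd, finrank_V4, hm']
  have hpair₁ : (ptsOn F (B.orthogonal m ⊓ B.orthogonal m')).ncard =
      (ptsOn F (m ⊓ m')).ncard := by
    rw [ncard_ptsOn, ncard_ptsOn,
      finrank_orthogonal_inf_orthogonal hnd (by rw [hm, hm', finrank_V4])]
  have hpair₂ : (ptsOn F (B.orthogonal m ⊓ m')).ncard =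
      (ptsOn F (m ⊓ B.orthogonal m')).ncard := by
    rw [ncard_ptsOn, ncard_ptsOn, ← finrank_orthogonal_inf_orthogonal hnd (X := m)
      (Y := B.orthogonal m') (by rw [hm, hm'o, finrank_V4]), orthogonal_orthogonal hnd hB.isRefl]
  rw [gridSet, Set.union_inter_distrib_right, Set.ncard_union_eq
      ((disjoint_ptsOn hdm).mono Set.inter_subset_left Set.inter_subset_left),
    ncard_ptsOn_inter_gridSet hdm', ncard_ptsOn_inter_gridSet hdm', hpair₁, hpair₂]
  exact ⟨(ptsOn F (m ⊓ m')).ncard + (ptsOn F (m ⊓ B.orthogonal m')).ncard, by ring⟩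

instance : Fintype (Pt F) := @Fintype.ofFinite _ Subtype.finite

lemma dotProduct_chi {S : Set (Submodule F (V4 F))} (hS : ∀ x ∈ S, IsPt F x)
    (T : Set (Submodule F (V4 F))) :
    chi F S ⬝ᵥ chi F T = ((S ∩ T).ncard : ZMod 2) := by
  simp only [dotProduct, chi, mul_ite, mul_one, mul_zero, ← ite_and, and_comm (a := _ ∈ T),
    ← Set.mem_inter_iff]
  rw [Finset.sum_boole, ← Set.ncard_coe_finset, Finset.coe_filter_univ]
  exact congrArg _ (Set.ncard_preimage_of_injective_subset_range Subtype.val_injective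
    fun x hx => ⟨⟨x, hS x hx.1⟩, rfl⟩)

end FiniteField

theorem stmt19 (B : LinearMap.BilinForm F (V4 F))
    (halt : ∀ v, B v v = 0) (hnd : B.Nondegenerate)
    (m m' : Submodule F (V4 F)) (hm : IsLn F m) (hm' : IsLn F m')
    (hmni : ¬ ∀ x ∈ m, ∀ y ∈ m, B x y = 0)
    (hm'ni : ¬ ∀ x ∈ m', ∀ y ∈ m', B x y = 0) :
    Even ((gridSet F B m ∩ gridSet F B m').ncard) ∧
    ∀ u ∈ gridCode F B, ∀ w ∈ gridCode F B,
      ∑ᶠ p : Pt F, u p * w p = 0 := by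
  refine ⟨even_ncard_gridSet_inter halt hnd hm hm' hmni hm'ni, fun u hu w hw => ?_⟩
  rw [finsum_eq_sum_of_fintype]
  refine (dotProductBilin (ZMod 2) (ZMod 2)).apply_apply_eq_zero_of_mem_span ?_ hu hw
  rintro _ ⟨m₁, hm₁, hm₁ni, rfl⟩ _ ⟨m₂, hm₂, hm₂ni, rfl⟩
  rw [dotProductBilin_apply_apply, dotProduct_chi isPt_of_mem_gridSet]
  exact (even_ncard_gridSet_inter halt hnd hm₁ hm₂ hm₁ni hm₂ni).natCast_zmod_two
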